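/- Let X be a group acting transitively on a set C with minimum-distance-5 structure as follows: C is a code in a Hamming graph with δ ≥ 5, X ≤ Aut(C) acts transitively on C, C₁ and C₂, and Δ is a block of imprimitivity for X on C. Then the setwise stabiliser X_Δ acts transitively on each of Δ, Δ₁ and Δ₂, where Δ_i is the set of vertices at distance i from Δ. -/

import Mathlib

/-- Distance from a vertex of the Hamming graph to a set of vertices. -/
noncomputable def distToSet {m q : ℕ} (S : Set (Fin m → Fin q))
    (v : Fin m → Fin q) : ℕ :=
  sInf ((hammingDist v) '' S)

/-!
A point within distance `2` of `Δ ⊆ C` has a unique nearest codeword, since two codewords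
within distance `2` of it would be at distance at most `4 < δ`; that codeword lies in `Δ`,
so `Δᵢ ⊆ Cᵢ` for `i ≤ 2`. Given `a, b ∈ Δᵢ`, transitivity of `X` on `Cᵢ` yields `x ∈ X` with
`x a = b`. As `x` is an isometry fixing `C`, it maps the nearest codeword `α ∈ Δ` of `a` to
the nearest codeword of `b`, which lies in `Δ`; so `x Δ` meets `Δ` and hence equals it.
-/

theorem eq_of_hammingDist_le_of_sep {ι : Type*} [Fintype ι] {β : ι → Type*}
    [∀ i, DecidableEq (β i)] {r : ℕ} {v α γ : ∀ i, β i}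
    (hsep : α ≠ γ → 2 * r < hammingDist α γ)
    (hα : hammingDist v α ≤ r) (hγ : hammingDist v γ ≤ r) : α = γ := by
  by_contra hne
  have := hammingDist_triangle_left α γ v
  have := hsep hne
  omega

section distToSet

variable {m q : ℕ} {S T : Set (Fin m → Fin q)} {v : Fin m → Fin q}

theorem distToSet_le_hammingDist {α : Fin m → Fin q} (hα : α ∈ S) :
    distToSet S v ≤ hammingDist v α :=
  Nat.sInf_le ⟨α, hα, rfl⟩

theorem exists_hammingDist_eq_distToSet (hS : S.Nonempty) (v : Fin m → Fin q) :
    ∃ α ∈ S, hammingDist v α = distToSet S v :=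
  Nat.sInf_mem (hS.image _)

theorem mem_of_distToSet_eq_zero (hS : S.Nonempty) (h : distToSet S v = 0) : v ∈ S := by
  obtain ⟨α, hα, hd⟩ := exists_hammingDist_eq_distToSet hS v
  rwa [hammingDist_eq_zero.mp (hd.trans h)]

theorem distToSet_eq_of_subset {r : ℕ} (hST : S ⊆ T) (hS : S.Nonempty)
    (hsep : ∀ α ∈ T, ∀ γ ∈ T, α ≠ γ → 2 * r < hammingDist α γ)
    (hv : distToSet S v ≤ r) : distToSet T v = distToSet S v := by
  obtain ⟨α, hαS, hα⟩ := exists_hammingDist_eq_distToSet hS v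
  obtain ⟨γ, hγT, hγ⟩ := exists_hammingDist_eq_distToSet (hS.mono hST) v
  have hγα : hammingDist v γ ≤ hammingDist v α := hγ ▸ distToSet_le_hammingDist (hST hαS)
  have : γ = α :=
    eq_of_hammingDist_le_of_sep (v := v) (hsep γ hγT α (hST hαS)) (by omega) (by omega)
  rw [← hα, ← hγ, this]

end distToSet

theorem image_eq_of_isBlock_of_mem {α : Type*} {X : Subgroup (Equiv.Perm α)} {Δ : Set α}
    (hblock : ∀ x ∈ X, (fun v => x v) '' Δ = Δ ∨ Disjoint ((fun v => x v) '' Δ) Δ)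
    {x : Equiv.Perm α} (hx : x ∈ X) {c : α} (hc : c ∈ Δ) (hxc : x c ∈ Δ) :
    (fun v => x v) '' Δ = Δ :=
  (hblock x hx).resolve_right
    (Set.not_disjoint_iff.mpr ⟨x c, Set.mem_image_of_mem _ hc, hxc⟩)

/-- If `C` is an `(X,2)`-neighbour-transitive code with `δ ≥ 5` and `Δ` is a block
of imprimitivity for `X` on `C`, then the setwise stabiliser of `Δ` acts
transitively on each of `Δ = Δ₀`, `Δ₁` and `Δ₂`. -/
theorem stmt_12 {m q : ℕ} (X : Subgroup (Equiv.Perm (Fin m → Fin q)))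
    (hiso : ∀ x ∈ X, ∀ u v : Fin m → Fin q,
      hammingDist (x u) (x v) = hammingDist u v)
    (C Δ : Set (Fin m → Fin q))
    (hinv : ∀ x ∈ X, ∀ v, v ∈ C ↔ x v ∈ C)
    (hδ : ∀ α ∈ C, ∀ β ∈ C, α ≠ β → 5 ≤ hammingDist α β)
    (htransC : ∀ a ∈ C, ∀ b ∈ C, ∃ x ∈ X, x a = b)
    (htrans12 : ∀ i ∈ ({1, 2} : Set ℕ), ∀ a b : Fin m → Fin q,
      distToSet C a = i → distToSet C b = i → ∃ x ∈ X, x a = b)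
    (hΔC : Δ ⊆ C) (hΔne : Δ.Nonempty)
    (hblock : ∀ x ∈ X, (fun v => x v) '' Δ = Δ ∨
      Disjoint ((fun v => x v) '' Δ) Δ) :
    ∀ i ∈ ({0, 1, 2} : Set ℕ), ∀ a b : Fin m → Fin q,
      distToSet Δ a = i → distToSet Δ b = i →
        ∃ x ∈ X, (fun v => x v) '' Δ = Δ ∧ x a = b := by
  intro i hi a b ha hb
  have hi2 : i ≤ 2 := by rcases hi with rfl | rfl | rfl <;> norm_num
  have hsep : ∀ α ∈ C, ∀ γ ∈ C, α ≠ γ → 2 * 2 < hammingDist α γ := hδ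
  have hCa : distToSet C a = i := (distToSet_eq_of_subset hΔC hΔne hsep (by omega)).trans ha
  have hCb : distToSet C b = i := (distToSet_eq_of_subset hΔC hΔne hsep (by omega)).trans hb
  obtain ⟨x, hx, rfl⟩ : ∃ x ∈ X, x a = b := by
    rcases hi with rfl | hi12
    · exact htransC a (mem_of_distToSet_eq_zero (hΔne.mono hΔC) hCa)
        b (mem_of_distToSet_eq_zero (hΔne.mono hΔC) hCb)
    · exact htrans12 i hi12 a b hCa hCb
  obtain ⟨α, hαΔ, hα⟩ := exists_hammingDist_eq_distToSet hΔne a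
  obtain ⟨β, hβΔ, hβ⟩ := exists_hammingDist_eq_distToSet hΔne (x a)
  have hxα : hammingDist (x a) (x α) = i := by rw [hiso x hx, hα, ha]
  have hxαβ : x α = β :=
    eq_of_hammingDist_le_of_sep (v := x a) (hsep _ ((hinv x hx α).mp (hΔC hαΔ)) β (hΔC hβΔ))
      (by omega) (by omega)
  exact ⟨x, hx, image_eq_of_isBlock_of_mem hblock hx hαΔ (hxαβ ▸ hβΔ), rfl⟩
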